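/- L¹-Lipschitz continuity of the solution (Lemma 3.5). Let ξ : ℝ^{D×D} → ℝ be continuous, let t⋆ > 0, and let f : [0,t⋆) × Q_∞ → ℝ be Fréchet differentiable at every point (jointly in (t,q), with the q-derivative taken with respect to the L² norm and represented by a gradient ∇_q f(t,q) ∈ L²) such that for every (t,q) ∈ [0,t⋆) × Q_∞: ∇_q f(t,q) ∈ L^∞ with |∇_q f(t,q)|_{L^∞} ≤ 1, and ∂_t f(t,q) = ∫₀¹ ξ(∇_q f(t,q)(u)) du. Then for all (t,q), (t′,q′) ∈ [0,t⋆) × Q_∞ one has |f(t,q) − f(t′,q′)| ≤ |q − q′|_{L¹} + |t − t′| · sup_{a ∈ ℝ^{D×D}, |a| ≤ 1} |ξ(a)|. In particular, f extends to a continuous function on [0,t⋆) × Q₁ (with Q₁ carrying the L¹ norm). -/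

import Mathlib

noncomputable section

open MeasureTheory Set Filter Topology RealInnerProductSpace

/-- `D×D` real matrices with the Frobenius (Euclidean) norm. -/
abbrev Mat (D : ℕ) : Type := EuclideanSpace ℝ (Fin D × Fin D)

/-- symmetric positive semidefinite matrices -/
def Mat.PSD {D : ℕ} (a : Mat D) : Prop :=
  (∀ i j : Fin D, a (i, j) = a (j, i)) ∧
    ∀ v : Fin D → ℝ, 0 ≤ ∑ i, ∑ j, v i * a (i, j) * v j

/-- the unit interval `[0,1)` as a type -/
abbrev UI : Type := Set.Ico (0 : ℝ) 1

abbrev SPath (D : ℕ) : Type := UI → Mat D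

/-- Lebesgue measure on `[0,1)` -/
instance : MeasureSpace UI := ⟨(volume : Measure ℝ).comap Subtype.val⟩

/-- càdlàg increasing `S^D_+`-valued path, i.e. a member of `Q` -/
def IsQ {D : ℕ} (p : SPath D) : Prop :=
  (∀ s, Mat.PSD (p s)) ∧
  (∀ s t : UI, s ≤ t → Mat.PSD (p t - p s)) ∧
  (∀ s : UI, ContinuousWithinAt p (Set.Ici s) s) ∧
  (∀ s : UI, (0 : ℝ) < (s : ℝ) →
    ∃ L : Mat D, Tendsto p (nhdsWithin s (Set.Iio s)) (nhds L))

/-- `L^∞` norm (sup norm on `[0,1)`) -/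
def supN {D : ℕ} (p : SPath D) : ℝ := sSup (Set.range fun s => ‖p s‖)

/-- bounded path, i.e. member of `L^∞` -/
def Bdd {D : ℕ} (p : SPath D) : Prop := BddAbove (Set.range fun s => ‖p s‖)

/-- `L¹` norm -/
def L1N {D : ℕ} (p : SPath D) : ℝ := ∫ s, ‖p s‖

/-- `L²` norm -/
def L2N {D : ℕ} (p : SPath D) : ℝ := Real.sqrt (∫ s, ‖p s‖ ^ 2)

/-- `L²` inner product -/
def L2I {D : ℕ} (p q : SPath D) : ℝ := ∫ s, ⟪p s, q s⟫

def Qinf (D : ℕ) : Set (SPath D) := {p | IsQ p ∧ Bdd p}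

def Qle1 (D : ℕ) : Set (SPath D) := {p | IsQ p ∧ ∀ s, ‖p s‖ ≤ 1}

def Q1 (D : ℕ) : Set (SPath D) := {p | IsQ p ∧ Integrable fun s => ‖p s‖}

def Q2 (D : ℕ) : Set (SPath D) := {p | IsQ p ∧ Integrable fun s => ‖p s‖ ^ 2}

/-- the path `s ↦ ∇ξ(p(s))` -/
def gradPath {D : ℕ} (ξ : Mat D → ℝ) (p : SPath D) : SPath D := fun s => gradient ξ (p s)

/-- `θ(a) = a·∇ξ(a) − ξ(a)` -/
def theta {D : ℕ} (ξ : Mat D → ℝ) (a : Mat D) : ℝ := ⟪a, gradient ξ a⟫ - ξ a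

/-- `∇ξ` is `L`-Lipschitz on the unit ball `B` -/
def LipOnB {D : ℕ} (ξ : Mat D → ℝ) (L : ℝ) : Prop :=
  ∀ a b : Mat D, ‖a‖ ≤ 1 → ‖b‖ ≤ 1 → ‖gradient ξ a - gradient ξ b‖ ≤ L * ‖a - b‖

/-
Along the segment from `(t, q)` to `(t', q')`, which stays in `[0, t⋆) × Q_∞` by convexity, the
chain rule gives `d/dr f = (t' - t) ∂_t f + ⟨q' - q, ∇_q f⟩_{L²}`. The Hamilton–Jacobi equation
bounds the first term by `|t' - t| sup_{|a| ≤ 1} |ξ(a)|`, and `|∇_q f|_{L^∞} ≤ 1` bounds the second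
by `|q' - q|_{L¹}`; the mean value theorem gives the Lipschitz estimate. The extension to `Q₁` is
McShane's infimal convolution for the pseudometric `|q - q'|_{L¹} + |t - t'| sup_{|a| ≤ 1} |ξ(a)|`.
-/

variable {D : ℕ}

namespace Mat

def quad (a : Mat D) (v : Fin D → ℝ) : ℝ := ∑ i, ∑ j, v i * a (i, j) * v j

lemma quad_sub (a b : Mat D) (v : Fin D → ℝ) : (a - b).quad v = a.quad v - b.quad v := by
  simp only [quad, PiLp.sub_apply, mul_sub, sub_mul, Finset.sum_sub_distrib]

lemma quad_single (a : Mat D) (i : Fin D) : a.quad (Pi.single i 1) = a (i, i) := by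
  simp [quad, Pi.single_apply]

lemma quad_single_add_single (a : Mat D) (i j : Fin D) :
    a.quad (Pi.single i 1 + Pi.single j 1) = a (i, i) + a (i, j) + a (j, i) + a (j, j) := by
  simp [quad, Pi.single_apply, add_mul, mul_add, Finset.sum_add_distrib]
  ring

lemma apply_eq_quad {a : Mat D} (ha : ∀ i j, a (i, j) = a (j, i)) (i j : Fin D) :
    a (i, j) =
      (a.quad (Pi.single i 1 + Pi.single j 1) - a.quad (Pi.single i 1) - a.quad (Pi.single j 1)) / 2 := by
  rw [quad_single_add_single, quad_single, quad_single, ha j i]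
  ring

lemma PSD.zero : (0 : Mat D).PSD := ⟨fun _ _ => rfl, fun v => by simp⟩

lemma PSD.add {a b : Mat D} (ha : a.PSD) (hb : b.PSD) : (a + b).PSD := by
  refine ⟨fun i j => by simp only [PiLp.add_apply, ha.1 i j, hb.1 i j], fun v => ?_⟩
  have h : (a + b).quad v = a.quad v + b.quad v := by
    simp only [quad, PiLp.add_apply, mul_add, add_mul, Finset.sum_add_distrib]
  show 0 ≤ (a + b).quad v
  exact h ▸ add_nonneg (ha.2 v) (hb.2 v)

lemma PSD.smul {a : Mat D} (ha : a.PSD) {r : ℝ} (hr : 0 ≤ r) : (r • a).PSD := by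
  refine ⟨fun i j => by simp only [PiLp.smul_apply, ha.1 i j], fun v => ?_⟩
  have h : (r • a).quad v = r * a.quad v := by
    simp only [quad, PiLp.smul_apply, smul_eq_mul, Finset.mul_sum]
    exact Finset.sum_congr rfl fun i _ => Finset.sum_congr rfl fun j _ => by ring
  show 0 ≤ (r • a).quad v
  exact h ▸ mul_nonneg hr (ha.2 v)

end Mat

namespace IsQ

lemma monotone_quad {p : SPath D} (hp : IsQ p) (v : Fin D → ℝ) :
    Monotone fun s => (p s).quad v := fun s t hst => by
  have h := (hp.2.1 s t hst).2 v
  rw [← Mat.quad, Mat.quad_sub] at h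
  exact sub_nonneg.mp h

/-- Each entry of `p` is a combination of the monotone functions `s ↦ (p s).quad v`. -/
lemma measurable {p : SPath D} (hp : IsQ p) : Measurable p := by
  refine (WithLp.measurable_toLp 2 _).comp (measurable_pi_iff.2 fun ij => ?_)
  have hentry : (fun s => p s ij) = fun s => ((p s).quad (Pi.single ij.1 1 + Pi.single ij.2 1) -
      (p s).quad (Pi.single ij.1 1) - (p s).quad (Pi.single ij.2 1)) / 2 :=
    funext fun s => Mat.apply_eq_quad (hp.1 s).1 ij.1 ij.2
  rw [show (fun s => (WithLp.ofLp (p s)) ij) = fun s => p s ij from rfl, hentry]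
  exact ((((hp.monotone_quad _).measurable.sub (hp.monotone_quad _).measurable).sub
    (hp.monotone_quad _).measurable).div_const 2)

lemma zero : IsQ (0 : SPath D) :=
  ⟨fun _ => Mat.PSD.zero, fun _ _ _ => by simpa using Mat.PSD.zero,
    fun _ => continuousWithinAt_const, fun _ _ => ⟨0, tendsto_const_nhds⟩⟩

lemma add {p q : SPath D} (hp : IsQ p) (hq : IsQ q) : IsQ (p + q) := by
  refine ⟨fun s => (hp.1 s).add (hq.1 s), fun s t hst => ?_, fun s => (hp.2.2.1 s).add (hq.2.2.1 s),
    fun s hs => ?_⟩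
  · rw [Pi.add_apply, Pi.add_apply, add_sub_add_comm]
    exact (hp.2.1 s t hst).add (hq.2.1 s t hst)
  · obtain ⟨L, hL⟩ := hp.2.2.2 s hs
    obtain ⟨L', hL'⟩ := hq.2.2.2 s hs
    exact ⟨L + L', hL.add hL'⟩

lemma smul {p : SPath D} (hp : IsQ p) {r : ℝ} (hr : 0 ≤ r) : IsQ (r • p) := by
  refine ⟨fun s => (hp.1 s).smul hr, fun s t hst => ?_, fun s => (hp.2.2.1 s).const_smul r,
    fun s hs => ?_⟩
  · rw [Pi.smul_apply, Pi.smul_apply, ← smul_sub]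
    exact (hp.2.1 s t hst).smul hr
  · obtain ⟨L, hL⟩ := hp.2.2.2 s hs
    exact ⟨r • L, hL.const_smul r⟩

end IsQ

namespace Bdd

lemma add {p q : SPath D} (hp : Bdd p) (hq : Bdd q) : Bdd (p + q) := by
  obtain ⟨C, hC⟩ := hp
  obtain ⟨C', hC'⟩ := hq
  refine ⟨C + C', ?_⟩
  rintro _ ⟨s, rfl⟩
  exact (norm_add_le _ _).trans (add_le_add (hC ⟨s, rfl⟩) (hC' ⟨s, rfl⟩))

lemma smul {p : SPath D} (hp : Bdd p) (r : ℝ) : Bdd (r • p) := by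
  obtain ⟨C, hC⟩ := hp
  refine ⟨|r| * C, ?_⟩
  rintro _ ⟨s, rfl⟩
  show ‖r • p s‖ ≤ _
  rw [norm_smul, Real.norm_eq_abs]
  exact mul_le_mul_of_nonneg_left (hC ⟨s, rfl⟩) (abs_nonneg r)

end Bdd

lemma zero_mem_Qinf : (0 : SPath D) ∈ Qinf D :=
  ⟨IsQ.zero, ⟨0, by rintro _ ⟨s, rfl⟩; simp⟩⟩

lemma convex_Qinf : Convex ℝ (Qinf D) := fun _ hp _ hq a b ha hb _ =>
  ⟨(hp.1.smul ha).add (hq.1.smul hb), (hp.2.smul a).add (hq.2.smul b)⟩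

instance : IsProbabilityMeasure (volume : Measure UI) := by
  constructor
  rw [show (volume : Measure UI) = (volume : Measure ℝ).comap Subtype.val from rfl,
    (MeasurableEmbedding.subtype_coe measurableSet_Ico).comap_apply,
    Set.image_univ, Subtype.range_coe, Real.volume_Ico]
  norm_num

lemma integrable_of_mem_Qinf {p : SPath D} (hp : p ∈ Qinf D) : Integrable p := by
  obtain ⟨C, hC⟩ := hp.2
  exact (integrable_const C).mono' hp.1.measurable.aestronglyMeasurable
    (Eventually.of_forall fun s => hC (mem_range_self s))

lemma integrable_of_mem_Q1 {p : SPath D} (hp : p ∈ Q1 D) : Integrable p :=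
  (integrable_norm_iff hp.1.measurable.aestronglyMeasurable).mp hp.2

lemma L1N_sub_comm (p q : SPath D) : L1N (p - q) = L1N (q - p) := by
  simp only [L1N, Pi.sub_apply, norm_sub_rev]

lemma L1N_sub_le {p q r : SPath D} (hp : Integrable p) (hq : Integrable q) (hr : Integrable r) :
    L1N (p - r) ≤ L1N (p - q) + L1N (q - r) := by
  unfold L1N
  rw [← integral_add (hp.sub hq).norm (hq.sub hr).norm]
  refine integral_mono (hp.sub hr).norm ((hp.sub hq).norm.add (hq.sub hr).norm) fun s => ?_
  exact norm_sub_le_norm_sub_add_norm_sub (p s) (q s) (r s)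

lemma L2N_smul (c : ℝ) (p : SPath D) : L2N (c • p) = |c| * L2N p := by
  simp only [L2N, Pi.smul_apply, norm_smul, mul_pow, Real.norm_eq_abs, sq_abs, integral_const_mul,
    Real.sqrt_mul (sq_nonneg c), Real.sqrt_sq_eq_abs]

lemma L2I_smul_left (c : ℝ) (p q : SPath D) : L2I (c • p) q = c * L2I p q := by
  simp only [L2I, Pi.smul_apply, real_inner_smul_left, integral_const_mul]

lemma abs_L2I_le_L1N {p q : SPath D} (hp : Integrable p) (hq : ∀ s, ‖q s‖ ≤ 1) :
    |L2I p q| ≤ L1N p := by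
  rw [← Real.norm_eq_abs]
  exact norm_integral_le_of_norm_le hp.norm (Eventually.of_forall fun s =>
    (abs_real_inner_le_norm _ _).trans (mul_le_of_le_one_right (norm_nonneg _) (hq s)))

lemma abs_le_sSup_abs_image_norm_le_one {E : Type*} [NormedAddCommGroup E] [ProperSpace E]
    {ξ : E → ℝ} (hξ : Continuous ξ) {a : E} (ha : ‖a‖ ≤ 1) :
    |ξ a| ≤ sSup ((fun a => |ξ a|) '' {a : E | ‖a‖ ≤ 1}) := by
  have hball : {a : E | ‖a‖ ≤ 1} = Metric.closedBall 0 1 := by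
    ext a; simp
  refine le_csSup ?_ ⟨a, ha, rfl⟩
  rw [hball]
  exact ((isCompact_closedBall 0 1).image (continuous_abs.comp hξ)).bddAbove

lemma abs_integral_le_of_abs_le {α : Type*} [MeasurableSpace α] {μ : Measure α}
    [IsProbabilityMeasure μ] {g : α → ℝ} {M : ℝ} (hg : ∀ u, |g u| ≤ M) : |∫ u, g u ∂μ| ≤ M := by
  simpa using norm_integral_le_of_norm_le_const (μ := μ) (f := g) (C := M)
    (Eventually.of_forall fun u => (Real.norm_eq_abs _).trans_le (hg u))

lemma hasDerivWithinAt_of_abs_sub_le {g : ℝ → ℝ} {g' C r : ℝ} {s : Set ℝ} (hC : 0 ≤ C)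
    (h : ∀ ε > 0, ∃ δ > 0, ∀ r' ∈ s, |r' - r| * C ≤ δ →
      |g r' - g r - (r' - r) * g'| ≤ ε * (|r' - r| * C)) :
    HasDerivWithinAt g g' s r := by
  rw [hasDerivWithinAt_iff_isLittleO, Asymptotics.isLittleO_iff]
  intro c hc
  obtain ⟨δ, hδ, hg⟩ := h (c / (C + 1)) (by positivity)
  rw [eventually_nhdsWithin_iff, Metric.eventually_nhds_iff]
  refine ⟨δ / (C + 1), by positivity, fun r' hr' hr's => ?_⟩
  rw [Real.dist_eq, lt_div_iff₀ (by positivity)] at hr'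
  have hCle : |r' - r| * C ≤ |r' - r| * (C + 1) := by nlinarith [abs_nonneg (r' - r)]
  calc ‖g r' - g r - (r' - r) • g'‖ ≤ c / (C + 1) * (|r' - r| * C) := hg r' hr's (by linarith)
    _ ≤ c / (C + 1) * (|r' - r| * (C + 1)) := by gcongr
    _ = c * ‖r' - r‖ := by field_simp; rw [Real.norm_eq_abs]

def HasL2FDerivOn (T : ℝ) (f ft : ℝ → SPath D → ℝ) (fq : ℝ → SPath D → SPath D) : Prop :=
  ∀ t : ℝ, 0 ≤ t → t < T → ∀ q ∈ Qinf D,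
    ∀ ε > 0, ∃ δ > 0, ∀ t' : ℝ, 0 ≤ t' → t' < T → ∀ q' ∈ Qinf D,
      |t' - t| + L2N (q' - q) ≤ δ →
      |f t' q' - f t q - (t' - t) * ft t q - L2I (q' - q) (fq t q)| ≤
        ε * (|t' - t| + L2N (q' - q))

namespace HasL2FDerivOn

variable {T : ℝ} {f ft : ℝ → SPath D → ℝ} {fq : ℝ → SPath D → SPath D}
  {t t' : ℝ} {q q' : SPath D}

lemma hasDerivWithinAt_segment (hf : HasL2FDerivOn T f ft fq) (ht : t ∈ Ico 0 T)
    (ht' : t' ∈ Ico 0 T) (hq : q ∈ Qinf D) (hq' : q' ∈ Qinf D) {r : ℝ} (hr : r ∈ Icc (0 : ℝ) 1) :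
    HasDerivWithinAt (fun r => f (t + r * (t' - t)) (q + r • (q' - q)))
      ((t' - t) * ft (t + r * (t' - t)) (q + r • (q' - q)) +
        L2I (q' - q) (fq (t + r * (t' - t)) (q + r • (q' - q)))) (Icc 0 1) r := by
  have hτ : ∀ r ∈ Icc (0 : ℝ) 1, t + r * (t' - t) ∈ Ico 0 T := fun r hr =>
    (convex_Ico 0 T).add_smul_sub_mem ht ht' hr
  have hp : ∀ r ∈ Icc (0 : ℝ) 1, q + r • (q' - q) ∈ Qinf D := fun r hr =>
    convex_Qinf.add_smul_sub_mem hq hq' hr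
  refine hasDerivWithinAt_of_abs_sub_le (C := |t' - t| + L2N (q' - q))
    (add_nonneg (abs_nonneg _) (Real.sqrt_nonneg _)) fun ε hε => ?_
  obtain ⟨δ, hδ, hfδ⟩ := hf _ (hτ r hr).1 (hτ r hr).2 _ (hp r hr) ε hε
  refine ⟨δ, hδ, fun r' hr' hdist => ?_⟩
  have hΔτ : t + r' * (t' - t) - (t + r * (t' - t)) = (r' - r) * (t' - t) := by ring
  have hΔp : q + r' • (q' - q) - (q + r • (q' - q)) = (r' - r) • (q' - q) := by module
  have hΔ : |t + r' * (t' - t) - (t + r * (t' - t))| +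
      L2N (q + r' • (q' - q) - (q + r • (q' - q))) = |r' - r| * (|t' - t| + L2N (q' - q)) := by
    rw [hΔτ, hΔp, L2N_smul, abs_mul]; ring
  have key := hfδ _ (hτ r' hr').1 (hτ r' hr').2 _ (hp r' hr') (hΔ ▸ hdist)
  rw [hΔ, hΔτ, hΔp, L2I_smul_left] at key
  convert key using 2
  ring

lemma abs_sub_le (hf : HasL2FDerivOn T f ft fq) {M : ℝ}
    (hft : ∀ t : ℝ, 0 ≤ t → t < T → ∀ q ∈ Qinf D, |ft t q| ≤ M)
    (hfq : ∀ t : ℝ, 0 ≤ t → t < T → ∀ q ∈ Qinf D, ∀ s : UI, ‖fq t q s‖ ≤ 1)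
    (ht : t ∈ Ico 0 T) (ht' : t' ∈ Ico 0 T) (hq : q ∈ Qinf D) (hq' : q' ∈ Qinf D) :
    |f t q - f t' q'| ≤ L1N (q - q') + |t - t'| * M := by
  have hτ : ∀ r ∈ Icc (0 : ℝ) 1, t + r * (t' - t) ∈ Ico 0 T := fun r hr =>
    (convex_Ico 0 T).add_smul_sub_mem ht ht' hr
  have hp : ∀ r ∈ Icc (0 : ℝ) 1, q + r • (q' - q) ∈ Qinf D := fun r hr =>
    convex_Qinf.add_smul_sub_mem hq hq' hr
  have hΔq : Integrable (q' - q) := (integrable_of_mem_Qinf hq').sub (integrable_of_mem_Qinf hq)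
  have hderiv_le : ∀ r ∈ Icc (0 : ℝ) 1,
      ‖(t' - t) * ft (t + r * (t' - t)) (q + r • (q' - q)) +
        L2I (q' - q) (fq (t + r * (t' - t)) (q + r • (q' - q)))‖ ≤ L1N (q - q') + |t - t'| * M := by
    intro r hr
    obtain ⟨hτ0, hτT⟩ := hτ r hr
    calc _ ≤ |t' - t| * |ft (t + r * (t' - t)) (q + r • (q' - q))| +
          |L2I (q' - q) (fq (t + r * (t' - t)) (q + r • (q' - q)))| := by
          rw [Real.norm_eq_abs, ← abs_mul]; exact abs_add_le _ _
      _ ≤ |t' - t| * M + L1N (q' - q) := by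
          gcongr
          · exact hft _ hτ0 hτT _ (hp r hr)
          · exact abs_L2I_le_L1N hΔq (hfq _ hτ0 hτT _ (hp r hr))
      _ = L1N (q - q') + |t - t'| * M := by rw [L1N_sub_comm, abs_sub_comm]; ring
  have hmvt := (convex_Icc (0 : ℝ) 1).norm_image_sub_le_of_norm_hasDerivWithin_le
    (fun r hr => hf.hasDerivWithinAt_segment ht ht' hq hq' hr) hderiv_le
    (left_mem_Icc.2 zero_le_one) (right_mem_Icc.2 zero_le_one)
  simpa [abs_sub_comm] using hmvt

end HasL2FDerivOn

theorem exists_extension_abs_sub_le {X : Type*} {S T : Set X} {d : X → X → ℝ} {f : X → ℝ}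
    (hS : S.Nonempty) (hST : S ⊆ T) (hd_self : ∀ x ∈ S, d x x = 0)
    (hd_comm : ∀ x ∈ T, ∀ y ∈ T, d x y = d y x)
    (hd_triangle : ∀ x ∈ T, ∀ y ∈ T, ∀ z ∈ T, d x z ≤ d x y + d y z)
    (hf : ∀ x ∈ S, ∀ y ∈ S, |f x - f y| ≤ d x y) :
    ∃ g : X → ℝ, (∀ x ∈ S, g x = f x) ∧ ∀ x ∈ T, ∀ y ∈ T, |g x - g y| ≤ d x y := by
  have : Nonempty S := hS.to_subtype
  set g : X → ℝ := fun x => ⨅ z : S, f z + d x z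
  have hbdd : ∀ x ∈ T, BddBelow (range fun z : S => f z + d x z) := by
    obtain ⟨z₀, hz₀⟩ := hS
    refine fun x hx => ⟨f z₀ - d z₀ x, ?_⟩
    rintro _ ⟨⟨z, hz⟩, rfl⟩
    have h₁ := hd_triangle z₀ (hST hz₀) x hx z (hST hz)
    have h₂ := (abs_le.1 (hf z₀ hz₀ z hz)).2
    dsimp only
    linarith
  have hg_le : ∀ x ∈ T, ∀ z ∈ S, g x ≤ f z + d x z := fun x hx z hz =>
    ciInf_le (hbdd x hx) ⟨z, hz⟩
  have hg_le_add : ∀ x ∈ T, ∀ y ∈ T, g x ≤ g y + d x y := by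
    intro x hx y hy
    suffices g x - d x y ≤ g y by linarith
    refine le_ciInf fun ⟨z, hz⟩ => ?_
    have := hd_triangle x hx y hy z (hST hz)
    linarith [hg_le x hx z hz]
  refine ⟨g, fun x hx => le_antisymm ?_ (le_ciInf fun ⟨z, hz⟩ => ?_), fun x hx y hy => ?_⟩
  · simpa [hd_self x hx] using hg_le x (hST hx) x hx
  · linarith [(abs_le.1 (hf x hx z hz)).2]
  · rw [abs_sub_le_iff]
    constructor
    · linarith [hg_le_add x hx y hy]
    · linarith [hg_le_add y hy x hx, hd_comm x hx y hy]

theorem exists_extension_to_Q1 {T M : ℝ} (hT : 0 < T) (hM : 0 ≤ M) {f : ℝ → SPath D → ℝ}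
    (hf : ∀ t : ℝ, 0 ≤ t → t < T → ∀ t' : ℝ, 0 ≤ t' → t' < T →
      ∀ q ∈ Qinf D, ∀ q' ∈ Qinf D, |f t q - f t' q'| ≤ L1N (q - q') + |t - t'| * M) :
    ∃ fbar : ℝ → SPath D → ℝ,
      (∀ t : ℝ, 0 ≤ t → t < T → ∀ q ∈ Qinf D, fbar t q = f t q) ∧
      (∀ t : ℝ, 0 ≤ t → t < T → ∀ t' : ℝ, 0 ≤ t' → t' < T →
        ∀ q ∈ Q1 D, ∀ q' ∈ Q1 D, |fbar t q - fbar t' q'| ≤ L1N (q - q') + |t - t'| * M) := by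
  obtain ⟨g, hg_eq, hg_lip⟩ := exists_extension_abs_sub_le (S := Ico 0 T ×ˢ Qinf D)
    (T := {x : ℝ × SPath D | Integrable x.2 volume})
    (d := fun x y => L1N (x.2 - y.2) + |x.1 - y.1| * M) (f := fun x => f x.1 x.2)
    ⟨(0, 0), ⟨le_rfl, hT⟩, zero_mem_Qinf⟩ (fun x hx => integrable_of_mem_Qinf hx.2)
    (fun x _ => by simp [L1N])
    (fun x _ y _ => by simp only [L1N_sub_comm x.2, abs_sub_comm x.1])
    (fun x hx y hy z hz => by
      have := L1N_sub_le hx hy hz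
      linarith [mul_le_mul_of_nonneg_right (abs_sub_le x.1 y.1 z.1) hM])
    (fun x hx y hy => hf x.1 hx.1.1 hx.1.2 y.1 hy.1.1 hy.1.2 x.2 hx.2 y.2 hy.2)
  exact ⟨fun t q => g (t, q), fun t ht0 ht q hq => hg_eq (t, q) ⟨⟨ht0, ht⟩, hq⟩,
    fun t _ _ t' _ _ q hq q' hq' =>
      hg_lip (t, q) (integrable_of_mem_Q1 hq) (t', q') (integrable_of_mem_Q1 hq')⟩

theorem L1_Lipschitz_continuity_of_solution
    {D : ℕ} (ξ : Mat D → ℝ) (hξ : Continuous ξ)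
    (tstar : ℝ) (htstar : 0 < tstar)
    (f ft : ℝ → SPath D → ℝ) (fq : ℝ → SPath D → SPath D)
    -- joint Fréchet differentiability of `f` at every point of `[0,t⋆) × Q_∞`, the
    -- `q`-derivative being taken with respect to the `L²` norm and represented by the
    -- gradient `fq t q`
    (hfdiff : ∀ t : ℝ, 0 ≤ t → t < tstar → ∀ q ∈ Qinf D,
      ∀ ε > 0, ∃ δ > 0, ∀ t' : ℝ, 0 ≤ t' → t' < tstar → ∀ q' ∈ Qinf D,
        |t' - t| + L2N (q' - q) ≤ δ →
        |f t' q' - f t q - (t' - t) * ft t q - L2I (q' - q) (fq t q)| ≤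
          ε * (|t' - t| + L2N (q' - q)))
    -- `∇_q f(t,q) ∈ L^∞` with `|∇_q f(t,q)|_{L^∞} ≤ 1`
    (hfqbdd : ∀ t : ℝ, 0 ≤ t → t < tstar → ∀ q ∈ Qinf D, ∀ s : UI, ‖fq t q s‖ ≤ 1)
    -- the Hamilton–Jacobi equation `∂_t f(t,q) = ∫₀¹ ξ(∇_q f(t,q)(u)) du`
    (hhj : ∀ t : ℝ, 0 ≤ t → t < tstar → ∀ q ∈ Qinf D, ft t q = ∫ u, ξ (fq t q u)) :
    (∀ t : ℝ, 0 ≤ t → t < tstar → ∀ t' : ℝ, 0 ≤ t' → t' < tstar →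
      ∀ q ∈ Qinf D, ∀ q' ∈ Qinf D,
        |f t q - f t' q'| ≤
          L1N (q - q') + |t - t'| * sSup ((fun a => |ξ a|) '' {a : Mat D | ‖a‖ ≤ 1})) ∧
    ∃ fbar : ℝ → SPath D → ℝ,
      (∀ t : ℝ, 0 ≤ t → t < tstar → ∀ q ∈ Qinf D, fbar t q = f t q) ∧
      (∀ t : ℝ, 0 ≤ t → t < tstar → ∀ t' : ℝ, 0 ≤ t' → t' < tstar →
        ∀ q ∈ Q1 D, ∀ q' ∈ Q1 D,
          |fbar t q - fbar t' q'| ≤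
            L1N (q - q') + |t - t'| * sSup ((fun a => |ξ a|) '' {a : Mat D | ‖a‖ ≤ 1})) := by
  set M := sSup ((fun a => |ξ a|) '' {a : Mat D | ‖a‖ ≤ 1})
  have hM : ∀ a : Mat D, ‖a‖ ≤ 1 → |ξ a| ≤ M := fun a ha => abs_le_sSup_abs_image_norm_le_one hξ ha
  have hM0 : 0 ≤ M := (abs_nonneg _).trans (hM 0 (by simp))
  have hft : ∀ t : ℝ, 0 ≤ t → t < tstar → ∀ q ∈ Qinf D, |ft t q| ≤ M := fun t ht0 ht q hq =>
    hhj t ht0 ht q hq ▸ abs_integral_le_of_abs_le fun u => hM _ (hfqbdd t ht0 ht q hq u)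
  have hlip : ∀ t : ℝ, 0 ≤ t → t < tstar → ∀ t' : ℝ, 0 ≤ t' → t' < tstar →
      ∀ q ∈ Qinf D, ∀ q' ∈ Qinf D, |f t q - f t' q'| ≤ L1N (q - q') + |t - t'| * M :=
    fun t ht0 ht t' ht0' ht' q hq q' hq' =>
      HasL2FDerivOn.abs_sub_le hfdiff hft hfqbdd ⟨ht0, ht⟩ ⟨ht0', ht'⟩ hq hq'
  exact ⟨hlip, exists_extension_to_Q1 htstar hM0 hlip⟩
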